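/- Let G be a finite abelian group. The power graph P(G) has more than one star vertex if and only if G is a nontrivial cyclic group. -/

import Mathlib

/-!
A star vertex `z ≠ 1` is comparable with every element of prime order `p`, hence `⟨z⟩` contains
all of them; as a cyclic group has only one subgroup of each order, all elements of order `p` then
generate the same subgroup. A noncyclic finite abelian group violates this: if `g` has maximal
order and `h` maps to an element of prime order `p` of `G ⧸ ⟨g⟩`, then `h` can be corrected by an
element of `⟨g⟩` to have order `p`, while `⟨g⟩` contains its own element of order `p`. Conversely,
`1` and a generator are star vertices of a nontrivial cyclic group.
-/

/-- The power graph of a group: distinct `x, y` are adjacent iff one is a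
positive power of the other. -/
def powerGraph (G : Type*) [Group G] : SimpleGraph G :=
  SimpleGraph.fromRel (fun x y => ∃ m : ℕ, 0 < m ∧ x = y ^ m)

/-- The set of star vertices of the power graph. -/
def starSet (G : Type*) [Group G] : Set G :=
  {x : G | ∀ y : G, y ≠ x → (powerGraph G).Adj x y}

open Subgroup

section Group

variable {G : Type*} [Group G] [Finite G]

theorem exists_pos_pow_eq_iff_mem_zpowers {x y : G} :
    (∃ m : ℕ, 0 < m ∧ x = y ^ m) ↔ x ∈ zpowers y := by
  refine ⟨fun ⟨m, _, hm⟩ => hm ▸ npow_mem_zpowers y m, fun hx => ?_⟩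
  obtain ⟨k, rfl⟩ := mem_powers_iff_mem_zpowers.2 hx
  exact ⟨k + orderOf y, by have := orderOf_pos y; omega, by
    rw [pow_add, pow_orderOf_eq_one, mul_one]⟩

theorem powerGraph_adj_iff {x y : G} :
    (powerGraph G).Adj x y ↔ x ≠ y ∧ (x ∈ zpowers y ∨ y ∈ zpowers x) := by
  simp only [powerGraph, SimpleGraph.fromRel_adj, exists_pos_pow_eq_iff_mem_zpowers]

theorem mem_starSet_iff {x : G} : x ∈ starSet G ↔ ∀ y : G, x ∈ zpowers y ∨ y ∈ zpowers x := by
  refine ⟨fun hx y => ?_, fun hx y hy => powerGraph_adj_iff.2 ⟨hy.symm, hx y⟩⟩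
  by_cases hyx : y = x
  · exact .inl (hyx ▸ mem_zpowers y)
  · exact (powerGraph_adj_iff.1 (hx y hyx)).2

theorem one_mem_starSet : (1 : G) ∈ starSet G :=
  mem_starSet_iff.2 fun _ => .inl (one_mem _)

theorem mem_starSet_of_forall_mem_zpowers {g : G} (hg : ∀ x, x ∈ zpowers g) : g ∈ starSet G :=
  mem_starSet_iff.2 fun y => .inr (hg y)

theorem zpowers_eq_zpowers_pow_orderOf_div {a z : G} (ha : a ∈ zpowers z) :
    zpowers a = zpowers (z ^ (orderOf z / orderOf a)) := by
  have hd : orderOf a ∣ orderOf z := orderOf_dvd_of_mem_zpowers ha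
  have hz : orderOf (z ^ (orderOf z / orderOf a)) = orderOf a :=
    orderOf_pow_orderOf_div (orderOf_pos z).ne' hd
  refine eq_of_le_of_card_ge (zpowers_le_of_mem ?_) (by rw [Nat.card_zpowers, Nat.card_zpowers, hz])
  obtain ⟨i, hi⟩ : ∃ i : ℕ, z ^ i = a := mem_powers_iff_mem_zpowers.2 ha
  have hni : orderOf z / orderOf a ∣ i := by
    refine Nat.dvd_of_mul_dvd_mul_right (orderOf_pos a) ?_
    rw [Nat.div_mul_cancel hd]
    exact orderOf_dvd_of_pow_eq_one (by rw [pow_mul, hi, pow_orderOf_eq_one])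
  obtain ⟨j, hj⟩ := hni
  rw [hj, pow_mul] at hi
  have hmem := npow_mem_zpowers (z ^ (orderOf z / orderOf a)) j
  rwa [hi] at hmem

theorem mem_zpowers_of_mem_starSet {z a : G} (hz : z ∈ starSet G) (hz1 : z ≠ 1)
    (ha : (orderOf a).Prime) : a ∈ zpowers z := by
  rcases mem_starSet_iff.1 hz a with hza | haz
  · have hoz : orderOf z = orderOf a :=
      (ha.eq_one_or_self_of_dvd _ (orderOf_dvd_of_mem_zpowers hza)).resolve_left
        (mt orderOf_eq_one_iff.1 hz1)
    have hza' : zpowers z = zpowers a := eq_of_le_of_card_ge (zpowers_le_of_mem hza)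
      (by rw [Nat.card_zpowers, Nat.card_zpowers, hoz])
    exact hza' ▸ mem_zpowers a
  · exact haz

end Group

section CommGroup

variable {G : Type*} [CommGroup G] [Finite G]

theorem exists_mul_pow_eq_one_of_pow_mem_zpowers {g h : G} (hg : orderOf g = Monoid.exponent G)
    {p : ℕ} (hpe : p ∣ Monoid.exponent G) (hh : h ^ p ∈ zpowers g) :
    ∃ c ∈ zpowers g, (h * c) ^ p = 1 := by
  obtain ⟨k, hk⟩ : ∃ k : ℕ, g ^ k = h ^ p := mem_powers_iff_mem_zpowers.2 hh
  have he : 0 < Monoid.exponent G := hg ▸ orderOf_pos g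
  have hpos : 0 < Monoid.exponent G / p :=
    Nat.div_pos (Nat.le_of_dvd he hpe) (Nat.pos_of_dvd_of_pos hpe he)
  have hpk : p ∣ k := by
    refine Nat.dvd_of_mul_dvd_mul_right hpos ?_
    have hgk : g ^ (k * (Monoid.exponent G / p)) = 1 := by
      rw [pow_mul, hk, ← pow_mul, Nat.mul_div_cancel' hpe, Monoid.pow_exponent_eq_one]
    calc p * (Monoid.exponent G / p) = orderOf g := by rw [Nat.mul_div_cancel' hpe, hg]
      _ ∣ k * (Monoid.exponent G / p) := orderOf_dvd_of_pow_eq_one hgk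
  obtain ⟨l, rfl⟩ := hpk
  refine ⟨(g ^ l)⁻¹, inv_mem (npow_mem_zpowers g l), ?_⟩
  rw [mul_pow, inv_pow, ← pow_mul, mul_comm l, ← hk, mul_inv_cancel]

theorem exists_orderOf_eq_prime_notMem_zpowers {g : G} (hg : orderOf g = Monoid.exponent G)
    (hG : zpowers g ≠ ⊤) :
    ∃ (p : ℕ) (b : G), p.Prime ∧ p ∣ orderOf g ∧ orderOf b = p ∧ b ∉ zpowers g := by
  have := QuotientGroup.nontrivial_iff.2 hG
  obtain ⟨p, hp, hpQ⟩ := Nat.exists_prime_and_dvd (Finite.one_lt_card_iff_nontrivial.2 this).ne'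
  have := Fact.mk hp
  obtain ⟨y, hy⟩ := exists_prime_orderOf_dvd_card' p hpQ
  obtain ⟨h, rfl⟩ := QuotientGroup.mk_surjective y
  have hpe : p ∣ Monoid.exponent G :=
    hy ▸ (orderOf_map_dvd (QuotientGroup.mk' _) h).trans (Monoid.order_dvd_exponent h)
  have hhp : h ^ p ∈ zpowers g := by
    rw [← QuotientGroup.eq_one_iff, QuotientGroup.mk_pow, ← hy, pow_orderOf_eq_one]
  obtain ⟨c, hc, hcp⟩ := exists_mul_pow_eq_one_of_pow_mem_zpowers hg hpe hhp
  have hhc : h * c ∉ zpowers g := fun hm => by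
    rw [(QuotientGroup.eq_one_iff h).2 ((mul_mem_cancel_right hc).1 hm), orderOf_one] at hy
    exact hp.ne_one hy.symm
  exact ⟨p, h * c, hp, hg ▸ hpe, orderOf_eq_prime hcp fun h1 => hhc (h1 ▸ one_mem _), hhc⟩

theorem exists_orderOf_eq_prime_notMem_zpowers_of_not_isCyclic (hG : ¬IsCyclic G) :
    ∃ (p : ℕ) (a b : G), p.Prime ∧ orderOf a = p ∧ orderOf b = p ∧ b ∉ zpowers a := by
  obtain ⟨g, hg⟩ := Monoid.exists_orderOf_eq_exponent (Monoid.ExponentExists.of_finite (G := G))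
  have hgtop : zpowers g ≠ ⊤ := fun htop => hG (isCyclic_iff_exists_zpowers_eq_top.2 ⟨g, htop⟩)
  obtain ⟨p, b, hp, hpg, hb, hbg⟩ := exists_orderOf_eq_prime_notMem_zpowers hg hgtop
  exact ⟨p, g ^ (orderOf g / p), b, hp, orderOf_pow_orderOf_div (orderOf_pos g).ne' hpg, hb,
    fun hba => hbg (zpowers_le_of_mem (npow_mem_zpowers g _) hba)⟩

theorem isCyclic_of_mem_starSet {z : G} (hz : z ∈ starSet G) (hz1 : z ≠ 1) : IsCyclic G := by
  by_contra hG
  obtain ⟨p, a, b, hp, ha, hb, hba⟩ := exists_orderOf_eq_prime_notMem_zpowers_of_not_isCyclic hG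
  have hza := zpowers_eq_zpowers_pow_orderOf_div (mem_zpowers_of_mem_starSet hz hz1 (ha ▸ hp))
  have hzb := zpowers_eq_zpowers_pow_orderOf_div (mem_zpowers_of_mem_starSet hz hz1 (hb ▸ hp))
  rw [hza, ha, ← hb, ← hzb] at hba
  exact hba (mem_zpowers b)

end CommGroup

theorem abelian_more_than_one_star_iff_cyclic {G : Type*} [CommGroup G]
    [Finite G] :
    1 < (starSet G).ncard ↔ IsCyclic G ∧ Nontrivial G := by
  constructor
  · intro h
    obtain ⟨z, hz, hz1⟩ := Set.exists_ne_of_one_lt_ncard h 1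
    exact ⟨isCyclic_of_mem_starSet hz hz1, nontrivial_of_ne z 1 hz1⟩
  · rintro ⟨hcyc, _⟩
    obtain ⟨g, hg⟩ := hcyc.exists_generator
    obtain ⟨x, hx⟩ := exists_ne (1 : G)
    have hg1 : g ≠ 1 := fun h1 => hx (by simpa [h1, zpowers_one_eq_bot] using hg x)
    exact (Set.one_lt_ncard_iff (Set.toFinite _)).2
      ⟨1, g, one_mem_starSet, mem_starSet_of_forall_mem_zpowers hg, hg1.symm⟩
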